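/- arXiv:1107.1364 — 6 statements merged into one kernel-verified Lean document; each statement's English description precedes it below -/
import Mathlib

section
/- Let F_q be a finite field with q ≡ 1 mod 3, χ₃ a multiplicative character of order 3 on F_q, and A₀, A₁, A₂ the three cosets of the subgroup of nonzero cubes (A_k = α^k · A₀ for a primitive element α). For β ≠ 0 and i, j ∈ {0,1,2}, the number of ordered pairs (x,y) with x ∈ A_j, y ∈ A_i, x + y = β equals (1/9)·(q − 2 − K − conj(K)) where K = χ₃(β)(ω^{2i} + ω^{2j}) + ω^{2i+j} − ω^{2i+2j}·conj(χ₃(β))·J(χ₃,χ₃), ω is a primitive cube root of unity in ℂ, and J(χ₃,χ₃) = Σ_{c₁+c₂=1} χ₃(c₁)χ₃(c₂) is the Jacobi sum. -/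
/-!
Detect `χ x = a` by orthogonality: for `a ^ n = 1` and `χ ^ n = 1`,
`∑_{t<n} χ^t(x) a^{-t}` is `n` if `χ x = a` and `0` otherwise. Multiplying the two detectors for
`x` and `β - x` and summing over `x` turns `n²` times the count into
`∑_{t,s} a^{-t} b^{-s} χ(β)^{t+s} J(χ^t, χ^s)`, after scaling `x ↦ β x`. For a cubic character
the nine Jacobi sums are `q - 2`, `-1` (a trivial factor, or `J(χ, χ⁻¹) = -χ(-1) = -1`),
`J(χ, χ)` and `J(χ², χ²) = conj J(χ, χ)`, and the result regroups as `q - 2 - K - conj K`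
using `a³ = b³ = χ(β)³ = 1`.
-/

open Finset ComplexConjugate

theorem sum_range_pow_eq_ite {K : Type*} [Field K] [DecidableEq K] {ζ : K} {n : ℕ}
    (h : ζ ^ n = 1) : ∑ t ∈ range n, ζ ^ t = if ζ = 1 then (n : K) else 0 := by
  split_ifs with hζ
  · simp [hζ]
  · rw [geom_sum_eq hζ, h, sub_self, zero_div]

theorem inv_eq_sq_of_pow_three_eq_one {G : Type*} [DivisionMonoid G] {x : G} (h : x ^ 3 = 1) :
    x⁻¹ = x ^ 2 :=
  inv_eq_of_mul_eq_one_right (by rw [← pow_succ']; exact h)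

theorem Complex.conj_eq_sq_of_pow_three_eq_one {z : ℂ} (h : z ^ 3 = 1) : conj z = z ^ 2 := by
  rw [← Complex.inv_eq_conj (Complex.norm_eq_one_of_pow_eq_one h three_ne_zero),
    inv_eq_sq_of_pow_three_eq_one h]

theorem Nat.card_pairs_add_eq {G : Type*} [AddCommGroup G] (P Q : G → Prop) (β : G) :
    Nat.card {p : G × G // P p.1 ∧ Q p.2 ∧ p.1 + p.2 = β} =
      Nat.card {x : G // P x ∧ Q (β - x)} :=
  Nat.card_congr
    { toFun := fun ⟨⟨x, _⟩, hx, hy, hxy⟩ => ⟨x, hx, eq_sub_of_add_eq' hxy ▸ hy⟩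
      invFun := fun ⟨x, hx, hy⟩ => ⟨(x, β - x), hx, hy, add_sub_cancel x β⟩
      left_inv := fun ⟨⟨_, _⟩, _, _, hxy⟩ =>
        Subtype.ext (Prod.ext rfl (eq_sub_of_add_eq' hxy).symm)
      right_inv := fun ⟨_, _, _⟩ => rfl }

namespace MulChar

theorem sum_pow_apply_mul_inv_pow {R K : Type*} [CommMonoid R] [Field K] [DecidableEq K]
    (χ : MulChar R K) {n : ℕ} (hχ : χ ^ n = 1) {a : K} (ha : a ^ n = 1) (x : R) :
    ∑ t ∈ range n, (χ ^ t) x * a⁻¹ ^ t = if χ x = a then (n : K) else 0 := by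
  obtain rfl | hn := eq_or_ne n 0
  · simp
  have ha₀ : a ≠ 0 := by rintro rfl; simp [hn] at ha
  by_cases hx : IsUnit x
  · obtain ⟨u, rfl⟩ := hx
    have hζ : (χ u * a⁻¹) ^ n = 1 := by
      rw [mul_pow, ← pow_apply_coe, hχ, one_apply_coe, inv_pow, ha, inv_one, one_mul]
    simp only [pow_apply_coe, ← mul_pow, sum_range_pow_eq_ite hζ, mul_inv_eq_one₀ ha₀]
  -- every power of `χ`, including `χ ^ 0 = 1`, vanishes at a non-unit
  · simp [map_nonunit _ hx, ha₀.symm]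

variable {F : Type*} [Field F]

theorem pow_apply_of_ne_zero {K : Type*} [CommMonoidWithZero K] (χ : MulChar F K) {β : F}
    (hβ : β ≠ 0) (n : ℕ) : (χ ^ n) β = χ β ^ n :=
  χ.pow_apply_coe n (Units.mk0 β hβ)

variable [Fintype F]

theorem sum_apply_mul_apply_sub {R : Type*} [CommRing R] (χ ψ : MulChar F R) {β : F}
    (hβ : β ≠ 0) : ∑ x, χ x * ψ (β - x) = (χ * ψ) β * jacobiSum χ ψ := by
  rw [jacobiSum, mul_sum]
  refine (Fintype.sum_bijective (β * ·) (mulLeft_bijective₀ β hβ) _ _ fun x => ?_).symm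
  rw [← mul_one_sub, map_mul, map_mul, coeToFun_mul, Pi.mul_apply]
  ring

theorem sq_card_add_eq_sum_jacobiSum {K : Type*} [Field K] [DecidableEq K]
    (χ : MulChar F K) {n : ℕ} (hχ : χ ^ n = 1) {a b : K} (ha : a ^ n = 1) (hb : b ^ n = 1)
    {β : F} (hβ : β ≠ 0) :
    (n : K) ^ 2 * Nat.card {p : F × F // χ p.1 = a ∧ χ p.2 = b ∧ p.1 + p.2 = β} =
      ∑ t ∈ range n, ∑ s ∈ range n,
        a⁻¹ ^ t * b⁻¹ ^ s * (χ β ^ (t + s) * jacobiSum (χ ^ t) (χ ^ s)) := by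
  calc (n : K) ^ 2 * Nat.card {p : F × F // χ p.1 = a ∧ χ p.2 = b ∧ p.1 + p.2 = β}
      = ∑ x, (if χ x = a then (n : K) else 0) * (if χ (β - x) = b then (n : K) else 0) := by
        rw [Nat.card_pairs_add_eq (χ · = a) (χ · = b), Nat.card_eq_fintype_card,
          Fintype.card_subtype, natCast_card_filter, mul_sum]
        simp_rw [ite_zero_mul_ite_zero, mul_ite, mul_one, mul_zero, sq]
    _ = ∑ x, (∑ t ∈ range n, (χ ^ t) x * a⁻¹ ^ t) *
          ∑ s ∈ range n, (χ ^ s) (β - x) * b⁻¹ ^ s := by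
        simp_rw [χ.sum_pow_apply_mul_inv_pow hχ ha, χ.sum_pow_apply_mul_inv_pow hχ hb]
    _ = ∑ t ∈ range n, ∑ s ∈ range n,
          a⁻¹ ^ t * b⁻¹ ^ s * ∑ x, (χ ^ t) x * (χ ^ s) (β - x) := by
        simp_rw [sum_mul_sum, mul_sum]
        rw [sum_comm]
        refine sum_congr rfl fun t _ => ?_
        rw [sum_comm]
        exact sum_congr rfl fun s _ => sum_congr rfl fun x _ => by ring
    _ = _ := by
        simp_rw [sum_apply_mul_apply_sub _ _ hβ, ← pow_add, χ.pow_apply_of_ne_zero hβ]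

theorem _root_.jacobiSum_inv_inv (χ ψ : MulChar F ℂ) :
    jacobiSum χ⁻¹ ψ⁻¹ = conj (jacobiSum χ ψ) := by
  rw [← star_eq_inv, ← star_eq_inv]
  exact jacobiSum_ringHomComp χ ψ (starRingEnd ℂ)

noncomputable def pairCountCorrection (χ : MulChar F ℂ) (a b : ℂ) (β : F) : ℂ :=
  χ β * (conj b + conj a) + conj b * a - conj b * conj a * conj (χ β) * jacobiSum χ χ

theorem nine_mul_card_add_eq {χ : MulChar F ℂ} (hχ : orderOf χ = 3) {a b : ℂ}
    (ha : a ^ 3 = 1) (hb : b ^ 3 = 1) {β : F} (hβ : β ≠ 0) :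
    9 * Nat.card {p : F × F // χ p.1 = a ∧ χ p.2 = b ∧ p.1 + p.2 = β} =
      Fintype.card F - 2 - χ.pairCountCorrection a b β - conj (χ.pairCountCorrection a b β) := by
  have hχ3 : χ ^ 3 = 1 := hχ ▸ pow_orderOf_eq_one χ
  have hχ1 : χ ≠ 1 := by rintro rfl; simp at hχ
  have hχinv : χ ^ 2 = χ⁻¹ := (inv_eq_sq_of_pow_three_eq_one hχ3).symm
  have hc : χ β ^ 3 = 1 := by rw [← χ.pow_apply_of_ne_zero hβ, hχ3, one_apply hβ.isUnit]
  have h := χ.sq_card_add_eq_sum_jacobiSum hχ3 ha hb hβ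
  simp only [sum_range_succ, sum_range_zero, zero_add, pow_zero, pow_one, hχinv] at h
  rw [jacobiSum_one_one, jacobiSum_comm χ 1, jacobiSum_comm χ⁻¹ 1, jacobiSum_comm χ⁻¹ χ,
    jacobiSum_one_nontrivial hχ1, jacobiSum_one_nontrivial (inv_ne_one.mpr hχ1),
    jacobiSum_nontrivial_inv hχ1, χ.val_neg_one_eq_one_of_odd_order (by decide) hχ3,
    jacobiSum_inv_inv, inv_eq_sq_of_pow_three_eq_one ha, inv_eq_sq_of_pow_three_eq_one hb] at h
  simp only [pairCountCorrection, map_sub, map_add, map_mul, Complex.conj_conj]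
  simp only [Complex.conj_eq_sq_of_pow_three_eq_one ha, Complex.conj_eq_sq_of_pow_three_eq_one hb,
    Complex.conj_eq_sq_of_pow_three_eq_one hc]
  set c := χ β
  set J := jacobiSum χ χ
  linear_combination h + (-c ^ 2 * a - a * b ^ 2 + a * b * c * conj J * b ^ 3 * c ^ 3) * ha
    + (-c ^ 2 * b - a ^ 2 * b + a * b * c * conj J * c ^ 3) * hb
    + (-a ^ 2 * b ^ 4 - a ^ 4 * b ^ 2 + a * b * c * conj J) * hc

end MulChar

open Complex in
theorem stmt_6_general (F : Type*) [Field F] [Fintype F]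
    (χ₃ : MulChar F ℂ) (hord : orderOf χ₃ = 3)
    (ω : ℂ) (hω : ω = Complex.exp (2 * Real.pi * Complex.I / 3))
    (β : F) (hβ : β ≠ 0) (i j : Fin 3)
    (J : ℂ) (hJ : J = ∑ x : F, χ₃ x * χ₃ (1 - x))
    (K : ℂ) (hK : K = χ₃ β * (ω ^ (2 * (i : ℕ)) + ω ^ (2 * (j : ℕ)))
      + ω ^ (2 * (i : ℕ) + (j : ℕ))
      - ω ^ (2 * (i : ℕ) + 2 * (j : ℕ)) * (starRingEnd ℂ) (χ₃ β) * J) :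
    (Nat.card {p : F × F //
        χ₃ p.1 = ω ^ (j : ℕ) ∧ χ₃ p.2 = ω ^ (i : ℕ) ∧ p.1 + p.2 = β} : ℂ) =
      (1 / 9) * ((Fintype.card F : ℂ) - 2 - K - (starRingEnd ℂ) K) := by
  have hω3 : ω ^ 3 = 1 := by
    simpa [hω] using (Complex.isPrimitiveRoot_exp 3 three_ne_zero).pow_eq_one
  have hpow (k : ℕ) : (ω ^ k) ^ 3 = 1 := by rw [← pow_mul, mul_comm, pow_mul, hω3, one_pow]
  have hconj (k : ℕ) : conj (ω ^ k) = ω ^ (2 * k) := by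
    rw [map_pow, Complex.conj_eq_sq_of_pow_three_eq_one hω3, ← pow_mul]
  have hK' : K = χ₃.pairCountCorrection (ω ^ (j : ℕ)) (ω ^ (i : ℕ)) β := by
    rw [hK, hJ, MulChar.pairCountCorrection, hconj, hconj, pow_add, pow_add]
    rfl
  rw [hK', ← χ₃.nine_mul_card_add_eq hord (hpow _) (hpow _) hβ]
  ring

open Complex in
theorem stmt_6 (F : Type*) [Field F] [Fintype F]
    (h3 : 3 ∣ Fintype.card F - 1)
    (χ₃ : MulChar F ℂ) (hord : orderOf χ₃ = 3)
    (ω : ℂ) (hω : ω = Complex.exp (2 * Real.pi * Complex.I / 3))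
    (hval : ∀ θ : F, θ ≠ 0 → ∃ h : Fin 3, χ₃ θ = ω ^ (h : ℕ))
    (β : F) (hβ : β ≠ 0) (i j : Fin 3)
    (J : ℂ) (hJ : J = ∑ x : F, χ₃ x * χ₃ (1 - x))
    (K : ℂ) (hK : K = χ₃ β * (ω ^ (2 * (i : ℕ)) + ω ^ (2 * (j : ℕ)))
      + ω ^ (2 * (i : ℕ) + (j : ℕ))
      - ω ^ (2 * (i : ℕ) + 2 * (j : ℕ)) * (starRingEnd ℂ) (χ₃ β) * J) :
    (Nat.card {p : F × F //
        χ₃ p.1 = ω ^ (j : ℕ) ∧ χ₃ p.2 = ω ^ (i : ℕ) ∧ p.1 + p.2 = β} : ℂ) =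
      (1 / 9) * ((Fintype.card F : ℂ) - 2 - K - (starRingEnd ℂ) K) :=
  stmt_6_general F χ₃ hord ω hω β hβ i j J hJ K hK
end

section
/- Let F be the finite field with 2^m elements, m even, and χ₃ a multiplicative character of order 3 on F. Then the Jacobi sum J(χ₃,χ₃) = Σ_{x∈F} χ₃(x)·χ₃(x+1) equals −(−2)^{m/2}. -/
/-!
In characteristic 2 the Frobenius `x ↦ x²` permutes `F`, so `J(χ, χ) = J(χ², χ²) = J(χ⁻¹, χ⁻¹)`,
and `J(χ, χ) J(χ⁻¹, χ⁻¹) = q` gives `J(χ, χ)² = 2^m`, i.e. `J(χ, χ) = ±(-2)^(m/2)`. The sign is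
fixed by the congruence `J(χ, χ) ≡ -1` modulo `(ω - 1)² = -3ω` in `ℤ[ω]`: as `(-2)^(m/2) ≡ 1 (mod 3)`,
the choice `+(-2)^(m/2)` would make `2/3` an algebraic integer.
-/

open Finset

theorem jacobiSum_pow_char {F R : Type*} [Field F] [Fintype F] [CommRing R] (p : ℕ) [Fact p.Prime]
    [CharP F p] (χ ψ : MulChar F R) : jacobiSum (χ ^ p) (ψ ^ p) = jacobiSum χ ψ := by
  have hp : p ≠ 0 := (Fact.out : p.Prime).ne_zero
  rw [jacobiSum, jacobiSum, ← (frobeniusEquiv F p).toEquiv.sum_comp fun x ↦ χ x * ψ (1 - x)]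
  refine sum_congr rfl fun x _ ↦ ?_
  rw [RingEquiv.toEquiv_eq_coe, EquivLike.coe_coe, frobeniusEquiv_def, MulChar.pow_apply' _ hp,
    MulChar.pow_apply' _ hp, ← map_pow, ← map_pow, sub_pow_char, one_pow]

theorem jacobiSum_sq_of_pow_three_eq_one {F F' : Type*} [Field F] [Fintype F] [Field F']
    [CharP F 2] (hF' : ringChar F' ≠ 2) {χ : MulChar F F'} (hχ : χ ≠ 1) (hχ3 : χ ^ 3 = 1) :
    jacobiSum χ χ ^ 2 = Fintype.card F := by
  have hsq : χ ^ 2 = χ⁻¹ := eq_inv_of_mul_eq_one_left (by rw [← pow_succ, hχ3])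
  have hχχ : χ * χ ≠ 1 := by rwa [← sq, hsq, inv_ne_one]
  rw [← jacobiSum_mul_jacobiSum_inv (by rwa [ringChar.eq F 2]) hχ hχ hχχ, ← hsq,
    jacobiSum_pow_char, sq]

theorem IsPrimitiveRoot.sub_one_sq_of_three {R : Type*} [CommRing R] [IsDomain R] {μ : R}
    (hμ : IsPrimitiveRoot μ 3) : (μ - 1) ^ 2 = -3 * μ := by
  have h := hμ.geom_sum_eq_zero (by norm_num)
  simp only [sum_range_succ, sum_range_zero] at h
  linear_combination h

theorem exists_isIntegral_jacobiSum_eq_neg_one_add_three_mul {F R : Type*} [Field F] [Fintype F]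
    [CommRing R] [IsDomain R] {χ ψ : MulChar F R} (hχ : χ ^ 3 = 1) (hψ : ψ ^ 3 = 1)
    (hF : 3 ∣ Fintype.card F - 1) {μ : R} (hμ : IsPrimitiveRoot μ 3) :
    ∃ w : R, IsIntegral ℤ w ∧ jacobiSum χ ψ = -1 + 3 * w := by
  obtain ⟨z, hz, hJ⟩ := exists_jacobiSum_eq_neg_one_add (by norm_num) hχ hψ hF hμ
  have hμint : IsIntegral ℤ μ := hμ.isIntegral (by norm_num)
  refine ⟨-(μ * z), (hμint.mul (adjoin_le_integralClosure hμint hz)).neg, ?_⟩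
  rw [hJ, hμ.sub_one_sq_of_three]
  ring

theorem dvd_of_intCast_mul_eq_of_isIntegral {K : Type*} [Field K] [CharZero K] {w : K}
    (hw : IsIntegral ℤ w) {n a : ℤ} (hn : n ≠ 0) (h : n * w = a) : n ∣ a := by
  have hwq : w = algebraMap ℚ K (a / n) := by
    rw [eq_comm, map_div₀, map_intCast, map_intCast, div_eq_iff (by exact_mod_cast hn), ← h,
      mul_comm]
  rw [hwq, isIntegral_algebraMap_iff (algebraMap ℚ K).injective] at hw
  obtain ⟨y, hy⟩ := IsIntegrallyClosed.isIntegral_iff.mp hw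
  refine ⟨y, ?_⟩
  have : (a : ℚ) = n * y := by
    rw [eq_div_iff (by exact_mod_cast hn)] at hy
    rw [← hy, algebraMap_int_eq, eq_intCast, mul_comm]
  exact_mod_cast this

theorem eq_neg_neg_two_pow_of_sq_eq_four_pow {K : Type*} [Field K] [CharZero K] {x w : K} {k : ℕ}
    (hx : x ^ 2 = 4 ^ k) (hw : IsIntegral ℤ w) (hxw : x = -1 + 3 * w) : x = -(-2) ^ k := by
  have hsq : x ^ 2 = ((-2) ^ k) ^ 2 := by rw [hx, ← pow_mul, mul_comm, pow_mul]; norm_num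
  refine (sq_eq_sq_iff_eq_or_eq_neg.mp hsq).resolve_left fun hpos ↦ ?_
  obtain ⟨c, hc⟩ : (3 : ℤ) ∣ (-2) ^ k - 1 := by
    simpa using sub_dvd_pow_sub_pow (-2 : ℤ) 1 k
  have h3 : ((3 : ℤ) : K) * (w - c) = (2 : ℤ) := by
    have hcK : (-2 : K) ^ k - 1 = 3 * c := by exact_mod_cast hc
    push_cast
    linear_combination hcK - hxw + hpos
  have := dvd_of_intCast_mul_eq_of_isIntegral (hw.sub isIntegral_algebraMap) (by norm_num) h3
  norm_num at this

theorem stmt_11_general (F : Type*) [Field F] [Fintype F] (m : ℕ)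
    (hcard : Fintype.card F = 2 ^ m) (hm : Even m)
    (χ₃ : MulChar F ℂ) (hord : orderOf χ₃ = 3) :
    ∑ x : F, χ₃ x * χ₃ (x + 1) = -(-2 : ℂ) ^ (m / 2) := by
  have : CharP F 2 := charP_of_card_eq_prime_pow hcard
  obtain ⟨k, rfl⟩ := hm
  have hcard' : Fintype.card F = 4 ^ k := by rw [hcard, ← two_mul, pow_mul]; norm_num
  have hχ3 : χ₃ ^ 3 = 1 := hord ▸ pow_orderOf_eq_one χ₃
  have hχ : χ₃ ≠ 1 := by rintro rfl; simp at hord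
  have hsum : ∑ x : F, χ₃ x * χ₃ (x + 1) = jacobiSum χ₃ χ₃ := by
    simp only [jacobiSum, sub_eq_add_neg, CharTwo.neg_eq, add_comm (1 : F)]
  have hJsq : jacobiSum χ₃ χ₃ ^ 2 = 4 ^ k := by
    rw [jacobiSum_sq_of_pow_three_eq_one (by simp) hχ hχ3, hcard']
    push_cast; rfl
  have h3 : 3 ∣ Fintype.card F - 1 := by
    simpa [hcard'] using Nat.sub_dvd_pow_sub_pow 4 1 k
  obtain ⟨w, hw, hJ⟩ := exists_isIntegral_jacobiSum_eq_neg_one_add_three_mul hχ3 hχ3 h3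
    (Complex.isPrimitiveRoot_exp 3 (by norm_num))
  rw [hsum, show (k + k) / 2 = k by omega]
  exact eq_neg_neg_two_pow_of_sq_eq_four_pow hJsq hw hJ

theorem stmt_11 (F : Type*) [Field F] [Fintype F] (m : ℕ)
    (hcard : Fintype.card F = 2 ^ m) (hm : Even m) (hm0 : m ≠ 0)
    (χ₃ : MulChar F ℂ) (hord : orderOf χ₃ = 3) :
    ∑ x : F, χ₃ x * χ₃ (x + 1) = -(-2 : ℂ) ^ (m / 2) :=
  stmt_11_general F m hcard hm χ₃ hord
end

section
/- Let p be an odd prime. Every nonzero quadratic residue mod p can be written as an ordered sum of two nonzero quadratic residues in exactly (1/4)(p − 4 − χ₂(−1)) ways if we require both summands to be nonzero quadratic residues, where χ₂(−1) = (−1)^{(p−1)/2}; explicitly, this count is ⌊(p+1)/4⌋ − 1. -/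
/-!
Dividing by `β` identifies the pairs `(x, β - x)` with the `u` such that `u` and `1 - u` are
nonzero squares. For `u ≠ 0, 1` the indicator of this condition is
`(1 + χ u) (1 + χ (1 - u)) / 4`, with `χ` the quadratic character. Summed over all of `F_p`,
this product gives `p + J(χ, χ) = p - χ(-1)`, since `χ = χ⁻¹`; the points `u = 0` and `u = 1`
each add `2` to the sum, so four times the count is `p - 4 - χ(-1)`.
-/

open Finset

section QuadraticChar

variable {F : Type*} [Field F] [Fintype F] [DecidableEq F]

lemma one_add_quadraticChar_of_ne_zero {a : F} (ha : a ≠ 0) :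
    1 + quadraticChar F a = if IsSquare a then 2 else 0 := by
  split_ifs with h
  · rw [(quadraticChar_one_iff_isSquare ha).mpr h]; rfl
  · rw [quadraticChar_neg_one_iff_not_isSquare.mpr h]; rfl

lemma sum_one_add_quadraticChar_mul_one_add_quadraticChar_one_sub (hF : ringChar F ≠ 2) :
    ∑ u : F, (1 + quadraticChar F u) * (1 + quadraticChar F (1 - u)) =
      Fintype.card F - quadraticChar F (-1) := by
  have hinv : (quadraticChar F)⁻¹ = quadraticChar F := (quadraticChar_isQuadratic F).inv
  have hjacobi : ∑ u : F, quadraticChar F u * quadraticChar F (1 - u) = -quadraticChar F (-1) := by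
    simpa only [hinv, jacobiSum] using jacobiSum_nontrivial_inv (quadraticChar_ne_one hF)
  have hreflect : ∑ u : F, quadraticChar F (1 - u) = 0 :=
    (Fintype.sum_equiv (Equiv.subLeft 1) _ _ fun _ ↦ rfl).trans (quadraticChar_sum_zero hF)
  simp only [add_mul, one_mul, mul_add, mul_one, sum_add_distrib, hjacobi, hreflect,
    quadraticChar_sum_zero hF, sum_const, card_univ, nsmul_eq_mul, mul_one]
  ring

lemma one_add_quadraticChar_mul_one_add_quadraticChar_one_sub (u : F) :
    (1 + quadraticChar F u) * (1 + quadraticChar F (1 - u)) =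
      4 * (if (u ≠ 0 ∧ IsSquare u) ∧ (1 - u ≠ 0 ∧ IsSquare (1 - u)) then 1 else 0) +
        (if u = 0 then 2 else 0) + (if u = 1 then 2 else 0) := by
  rcases eq_or_ne u 0 with rfl | hu0
  · simp
  rcases eq_or_ne u 1 with rfl | hu1
  · simp
  have h1u : 1 - u ≠ 0 := sub_ne_zero.mpr hu1.symm
  rw [one_add_quadraticChar_of_ne_zero hu0, one_add_quadraticChar_of_ne_zero h1u]
  split_ifs <;> simp_all

theorem four_mul_natCard_isSquare_one_sub (hF : ringChar F ≠ 2) :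
    4 * (Nat.card {u : F // (u ≠ 0 ∧ IsSquare u) ∧ (1 - u ≠ 0 ∧ IsSquare (1 - u))} : ℤ) =
      Fintype.card F - 4 - quadraticChar F (-1) := by
  classical
  have hcard : (Nat.card {u : F // (u ≠ 0 ∧ IsSquare u) ∧ (1 - u ≠ 0 ∧ IsSquare (1 - u))} : ℤ) =
      ∑ u : F, if (u ≠ 0 ∧ IsSquare u) ∧ (1 - u ≠ 0 ∧ IsSquare (1 - u)) then 1 else 0 := by
    rw [Nat.card_eq_fintype_card, Fintype.card_subtype, card_filter, Nat.cast_sum]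
    push_cast; rfl
  have hsum := sum_one_add_quadraticChar_mul_one_add_quadraticChar_one_sub hF
  simp only [one_add_quadraticChar_mul_one_add_quadraticChar_one_sub, sum_add_distrib,
    ← mul_sum, sum_ite_eq', mem_univ, if_true] at hsum
  rw [hcard]
  linarith

end QuadraticChar

section Scaling

def subtypeProdAddEquiv {α : Type*} [AddCommGroup α] (P Q : α → Prop) (b : α) :
    {q : α × α // P q.1 ∧ Q q.2 ∧ q.1 + q.2 = b} ≃ {x : α // P x ∧ Q (b - x)} where
  toFun q := ⟨q.1.1, q.2.1, by obtain ⟨⟨x, y⟩, -, hy, rfl⟩ := q; simpa using hy⟩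
  invFun x := ⟨(x.1, b - x.1), x.2.1, x.2.2, add_sub_cancel x.1 b⟩
  left_inv := by
    rintro ⟨⟨x, y⟩, -, -, rfl⟩
    simp
  right_inv _ := rfl

lemma isSquare_mul_iff_of_isSquare {G₀ : Type*} [CommGroupWithZero G₀] {β : G₀} (hβ : β ≠ 0)
    (hβsq : IsSquare β) {x : G₀} : IsSquare (β * x) ↔ IsSquare x :=
  ⟨fun h ↦ by simpa [mul_div_cancel_left₀ x hβ] using h.div hβsq, hβsq.mul⟩

variable {K : Type*} [Field K]

lemma natCard_isSquare_add_eq_natCard_isSquare_one_sub (β : K) (hβ : β ≠ 0) (hβsq : IsSquare β) :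
    Nat.card {q : K × K //
        (q.1 ≠ 0 ∧ IsSquare q.1) ∧ (q.2 ≠ 0 ∧ IsSquare q.2) ∧ q.1 + q.2 = β} =
      Nat.card {u : K // (u ≠ 0 ∧ IsSquare u) ∧ (1 - u ≠ 0 ∧ IsSquare (1 - u))} := by
  refine Nat.card_congr <| (subtypeProdAddEquiv (fun x ↦ x ≠ 0 ∧ IsSquare x)
    (fun x ↦ x ≠ 0 ∧ IsSquare x) β).trans
      (Equiv.subtypeEquiv (Equiv.mulLeft₀ β hβ) fun u ↦ ?_).symm
  simp only [Equiv.mulLeft₀_apply, ← mul_one_sub, mul_ne_zero_iff, ne_eq, hβ, not_false_eq_true,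
    true_and, isSquare_mul_iff_of_isSquare hβ hβsq]

end Scaling

theorem stmt_14 (p : ℕ) (hp : p.Prime) (hodd : Odd p)
    (β : ZMod p) (hβ : β ≠ 0) (hβsq : IsSquare β) :
    (Nat.card {q : ZMod p × ZMod p //
        (q.1 ≠ 0 ∧ IsSquare q.1) ∧ (q.2 ≠ 0 ∧ IsSquare q.2) ∧ q.1 + q.2 = β} : ℚ) =
      (1 / 4) * ((p : ℚ) - 4 - (-1) ^ ((p - 1) / 2)) ∧
    Nat.card {q : ZMod p × ZMod p //
        (q.1 ≠ 0 ∧ IsSquare q.1) ∧ (q.2 ≠ 0 ∧ IsSquare q.2) ∧ q.1 + q.2 = β} =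
      (p + 1) / 4 - 1 := by
  have : Fact p.Prime := ⟨hp⟩
  have hchar : ringChar (ZMod p) ≠ 2 := by
    rw [ZMod.ringChar_zmod_n]
    rintro rfl
    exact Nat.not_odd_iff_even.mpr even_two hodd
  have hχ : quadraticChar (ZMod p) (-1) = (-1) ^ ((p - 1) / 2) := by
    rw [quadraticChar_neg_one hchar, ZMod.card, ZMod.χ₄_eq_neg_one_pow (Nat.odd_iff.mp hodd)]
    congr 1
    have := Nat.odd_iff.mp hodd
    omega
  have key := four_mul_natCard_isSquare_one_sub hchar
  rw [← natCard_isSquare_add_eq_natCard_isSquare_one_sub β hβ hβsq, ZMod.card, hχ] at key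
  constructor
  · have keyℚ := congrArg (Int.cast : ℤ → ℚ) key
    push_cast at keyℚ
    linarith
  · rcases neg_one_pow_eq_or ℤ ((p - 1) / 2) with h | h <;> rw [h] at key <;> omega
end

section
/- Let p be an odd prime and β a nonzero quadratic residue mod p. The number of ordered pairs (x, y) of quadratic non-residues mod p with x + y = β equals ⌊(p+1)/4⌋. -/
/-!
For the quadratic character `χ` and a nonzero square `β`, the product
`(1 - χ x) * (1 - χ (β - x))` is `4` when `x` and `β - x` are both non-squares and `0` otherwise
(the terms `x = 0` and `x = β` vanish because `χ β = 1`). Summing over `x`, the linear terms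
vanish and the convolution `∑ χ x * χ (β - x)` is a Jacobi sum, equal to `-χ (-1)`. Hence four
times the count is `q - χ (-1)`, where `q = #F` and `χ (-1) = ±1` according as `q ≡ ±1 mod 4`.
-/

open Finset ZMod

section AddCommGroup

variable {G : Type*} [AddCommGroup G]

def pairsWithSumEquiv (P Q : G → Prop) (β : G) :
    {q : G × G // P q.1 ∧ Q q.2 ∧ q.1 + q.2 = β} ≃ {x : G // P x ∧ Q (β - x)} where
  toFun q := ⟨q.1.1, q.2.1, by
    obtain ⟨_, hq, hsum⟩ := q.2
    rwa [eq_sub_of_add_eq' hsum] at hq⟩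
  invFun x := ⟨(x.1, β - x.1), x.2.1, x.2.2, add_sub_cancel x.1 β⟩
  left_inv := by
    rintro ⟨⟨a, b⟩, _, _, rfl⟩
    simp
  right_inv _ := rfl

end AddCommGroup

section FiniteField

variable {F : Type*} [Field F] [Fintype F] [DecidableEq F]

local notation "χ" => quadraticChar F

theorem quadraticChar_sum_sub_eq_zero (hF : ringChar F ≠ 2) (β : F) :
    ∑ x : F, χ (β - x) = 0 := by
  rw [Fintype.sum_equiv (Equiv.subLeft β) (fun x ↦ χ (β - x)) χ fun _ ↦ rfl]
  exact quadraticChar_sum_zero hF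

/-- Rescaling `x = β t` turns this sum into the Jacobi sum `J(χ, χ) = J(χ, χ⁻¹)`. -/
theorem quadraticChar_sum_mul_sub (hF : ringChar F ≠ 2) {β : F} (hβ : β ≠ 0) :
    ∑ x : F, χ x * χ (β - x) = -χ (-1) := by
  have hJ : jacobiSum χ χ = -χ (-1) := by
    simpa only [quadraticChar_isQuadratic F |>.inv] using
      jacobiSum_nontrivial_inv (quadraticChar_ne_one hF)
  rw [← hJ, jacobiSum]
  refine (Fintype.sum_equiv (Equiv.mulLeft₀ β hβ) _ _ fun t ↦ ?_).symm
  have hβ2 : χ β * χ β = 1 := by rw [← sq, quadraticChar_sq_one hβ]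
  change χ t * χ (1 - t) = χ (β * t) * χ (β - β * t)
  rw [← mul_one_sub, map_mul, map_mul]
  linear_combination (χ t * χ (1 - t)) * hβ2.symm

theorem one_sub_quadraticChar_mul_one_sub_quadraticChar_sub {β : F} (hβ : β ≠ 0)
    (hβsq : IsSquare β) (x : F) :
    (1 - χ x) * (1 - χ (β - x)) = if ¬IsSquare x ∧ ¬IsSquare (β - x) then 4 else 0 := by
  have hχβ : χ β = 1 := (quadraticChar_one_iff_isSquare hβ).2 hβsq
  rcases eq_or_ne x 0 with rfl | hx
  · simp [hχβ]
  rcases eq_or_ne x β with rfl | hxβ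
  · simp [hχβ, hβsq]
  have hβx : β - x ≠ 0 := sub_ne_zero.2 hxβ.symm
  simp only [← quadraticChar_neg_one_iff_not_isSquare]
  rcases quadraticChar_dichotomy hx with h | h <;>
    rcases quadraticChar_dichotomy hβx with h' | h' <;> norm_num [h, h']

theorem four_mul_card_nonsquare_sub_nonsquare (hF : ringChar F ≠ 2) {β : F}
    (hβ : β ≠ 0) (hβsq : IsSquare β) :
    4 * (#{x | ¬IsSquare x ∧ ¬IsSquare (β - x)} : ℤ) = Fintype.card F - χ₄ (Fintype.card F) := by
  calc 4 * (#{x | ¬IsSquare x ∧ ¬IsSquare (β - x)} : ℤ)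
      = ∑ x : F, (1 - χ x) * (1 - χ (β - x)) := by
        simp only [one_sub_quadraticChar_mul_one_sub_quadraticChar_sub hβ hβsq, sum_ite,
          sum_const, nsmul_eq_mul]
        ring
    _ = ∑ x : F, (1 - χ x - χ (β - x) + χ x * χ (β - x)) := by congr! 1; ring
    _ = Fintype.card F - χ (-1) := by
        simp only [sum_add_distrib, sum_sub_distrib, quadraticChar_sum_zero hF,
          quadraticChar_sum_sub_eq_zero hF, quadraticChar_sum_mul_sub hF hβ, sum_const,
          card_univ, nsmul_eq_mul, mul_one]
        ring
    _ = Fintype.card F - χ₄ (Fintype.card F) := by rw [quadraticChar_neg_one hF]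

end FiniteField

theorem FiniteField.card_pairs_nonsquare_add_eq {F : Type*} [Field F] [Fintype F]
    (hF : ringChar F ≠ 2) {β : F} (hβ : β ≠ 0) (hβsq : IsSquare β) :
    Nat.card {q : F × F // ¬IsSquare q.1 ∧ ¬IsSquare q.2 ∧ q.1 + q.2 = β} =
      (Fintype.card F + 1) / 4 := by
  classical
  rw [Nat.card_congr (pairsWithSumEquiv (¬IsSquare ·) (¬IsSquare ·) β),
    Nat.card_eq_fintype_card, Fintype.card_subtype]
  have h4 := four_mul_card_nonsquare_sub_nonsquare hF hβ hβsq
  have hodd : Fintype.card F % 2 = 1 := FiniteField.odd_card_of_char_ne_two hF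
  rw [χ₄_nat_eq_if_mod_four] at h4
  split_ifs at h4 <;> omega

theorem stmt_15 (p : ℕ) (hp : p.Prime) (hodd : Odd p)
    (β : ZMod p) (hβ : β ≠ 0) (hβsq : IsSquare β) :
    Nat.card {q : ZMod p × ZMod p //
        (q.1 ≠ 0 ∧ ¬ IsSquare q.1) ∧ (q.2 ≠ 0 ∧ ¬ IsSquare q.2) ∧ q.1 + q.2 = β} =
      (p + 1) / 4 := by
  have : Fact p.Prime := ⟨hp⟩
  have hF : ringChar (ZMod p) ≠ 2 := by
    rw [ZMod.ringChar_zmod_n]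
    rintro rfl
    exact absurd hodd (by decide)
  have hnonsq (x : ZMod p) : (x ≠ 0 ∧ ¬IsSquare x) ↔ ¬IsSquare x :=
    and_iff_right_of_imp fun hx h0 ↦ hx (h0 ▸ IsSquare.zero)
  simp only [hnonsq]
  rw [FiniteField.card_pairs_nonsquare_add_eq hF hβ hβsq, ZMod.card]
end

section
/- Let F_q be a finite field, χ a nontrivial multiplicative character of order n, ω a fixed primitive n-th root of unity in ℂ, and x_j a nonzero element of F_q. For i ∈ {0,...,n−1}, let σ_i be the number of x ∈ F_q with χ(x)·conj(χ(x + x_j)) = ω^i. Then σ_0 + 1 = σ_1 = σ_2 = ⋯ = σ_{n−1} = (q−1)/n. -/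
/-!
Since `conj (χ b) = χ b⁻¹`, the condition on `x` reads `χ (x / (x + x_j)) = ω ^ i`, and the Möbius map
`x ↦ x / (x + x_j)` is a bijection from `F ∖ {-x_j}` onto `F ∖ {1}`; so `σ i` counts the `y ≠ 1`
with `χ y = ω ^ i`. On `Fˣ`, `χ` is a homomorphism whose image is a finite cyclic group of exponent
`n`, hence equal to the group of `n`-th roots of unity; every fibre is then a coset of the kernel,
of size `(q - 1) / n`, and removing `y = 1` from the fibre over `1` accounts for the `+ 1`.
-/

section Mobius

variable {F α : Type*} [Field F]

-- The excluded point `x = -c` is sent to `0` by the convention `x / 0 = 0`, hence `ha`.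
theorem card_fiber_comp_div_add {c : F} (hc : c ≠ 0) {f : F → α} {a : α} (ha : f 0 ≠ a) :
    Nat.card {x : F // f (x / (x + c)) = a} = Nat.card {y : F // f y = a ∧ y ≠ 1} := by
  have hxc : ∀ x : F, f (x / (x + c)) = a → x + c ≠ 0 := fun x hx h => by
    rw [h, div_zero] at hx
    exact ha hx
  have hy : ∀ y : F, y ≠ 1 → c * y / (1 - y) / (c * y / (1 - y) + c) = y := fun y hy => by
    have : 1 - y ≠ 0 := sub_ne_zero.mpr hy.symm
    field_simp
    ring
  refine Nat.card_congr
    { toFun := fun x => ⟨x / (x + c), x.2, fun h => hc ?_⟩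
      invFun := fun y => ⟨c * y / (1 - y), by rw [hy y y.2.2]; exact y.2.1⟩
      left_inv := fun x => Subtype.ext ?_
      right_inv := fun y => Subtype.ext (hy y y.2.2) }
  · rw [div_eq_one_iff_eq (hxc x x.2)] at h
    simpa using h
  · have hx := hxc x x.2
    change c * (x / (x + c)) / (1 - x / (x + c)) = x
    rw [one_sub_div hx, add_sub_cancel_left]
    field_simp

end Mobius

theorem MonoidHom.orderOf_eq_exponent_range {G H : Type*} [Group G] [CommGroup H] (f : G →* H) :
    orderOf f = Monoid.exponent f.range := by
  refine Nat.dvd_antisymm ?_ (Monoid.exponent_dvd_of_forall_pow_eq_one fun ⟨_, g, rfl⟩ => ?_)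
  · refine orderOf_dvd_of_pow_eq_one (MonoidHom.ext fun g => ?_)
    simpa using congrArg Subtype.val (Monoid.pow_exponent_eq_one (⟨f g, g, rfl⟩ : f.range))
  · ext
    simp [← MonoidHom.pow_apply, pow_orderOf_eq_one]

namespace MulChar

variable {M R : Type*} [CommMonoid M] [CommRing R]

theorem orderOf_toUnitHom (χ : MulChar M R) : orderOf χ.toUnitHom = orderOf χ :=
  mulEquivToUnitHom.orderOf_eq χ

variable [IsDomain R] [Finite Mˣ]

theorem card_range_toUnitHom (χ : MulChar M R) : Nat.card χ.toUnitHom.range = orderOf χ := by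
  have : Finite χ.toUnitHom.range := Finite.of_surjective _ χ.toUnitHom.rangeRestrict_surjective
  rw [← orderOf_toUnitHom, MonoidHom.orderOf_eq_exponent_range, IsCyclic.exponent_eq_card]

theorem range_toUnitHom (χ : MulChar M R) : χ.toUnitHom.range = rootsOfUnity (orderOf χ) R := by
  have : NeZero (orderOf χ) := ⟨χ.orderOf_pos.ne'⟩
  refine Subgroup.eq_of_le_of_card_ge ?_ ?_
  · rintro _ ⟨u, rfl⟩
    rw [mem_rootsOfUnity, ← MonoidHom.pow_apply, ← orderOf_toUnitHom, pow_orderOf_eq_one,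
      MonoidHom.one_apply]
  · rw [card_range_toUnitHom]
    exact card_rootsOfUnity _ _

theorem card_units_eq_orderOf_mul_card_ker (χ : MulChar M R) :
    Nat.card Mˣ = orderOf χ * Nat.card χ.toUnitHom.ker := by
  rw [← Subgroup.card_mul_index χ.toUnitHom.ker, Subgroup.index_ker, card_range_toUnitHom, mul_comm]

theorem card_fiber_eq_card_ker (χ : MulChar M R) {ζ : R} (hζ : ζ ^ orderOf χ = 1) :
    Nat.card {x : M // χ x = ζ} = Nat.card χ.toUnitHom.ker := by
  have hu : IsUnit ζ := IsUnit.of_pow_eq_one hζ χ.orderOf_pos.ne'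
  obtain ⟨g, hg⟩ : hu.unit ∈ χ.toUnitHom.range := by
    rw [range_toUnitHom, mem_rootsOfUnity, Units.ext_iff]
    simpa using hζ
  rw [← Nat.card_congr (χ.toUnitHom.fiberEquivKer g)]
  have hx : ∀ x : {x : M // χ x = ζ}, IsUnit x.1 := fun x =>
    apply_ne_zero_iff.mp (x.2 ▸ hu.ne_zero)
  refine Nat.card_congr
    { toFun := fun x => ⟨(hx x).unit, ?_⟩
      invFun := fun u => ⟨u.1, ?_⟩
      left_inv := fun x => rfl
      right_inv := fun u => Subtype.ext (Units.ext rfl) }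
  · rw [Set.mem_preimage, Set.mem_singleton_iff, hg, Units.ext_iff, coe_toUnitHom,
      IsUnit.unit_spec, IsUnit.unit_spec, x.2]
  · rw [← coe_toUnitHom, u.2, hg, IsUnit.unit_spec]

theorem mul_starRingEnd_apply {F : Type*} [Field F] [Finite F] (χ : MulChar F ℂ) (x y : F) :
    χ x * starRingEnd ℂ (χ y) = χ (x / y) := by
  rw [starRingEnd_apply, star_apply', inv_apply', ← map_mul, div_eq_mul_inv]

end MulChar

theorem stmt_16_general (F : Type*) [Field F] [Fintype F] (n : ℕ)
    (χ : MulChar F ℂ) (hord : orderOf χ = n)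
    (ω : ℂ) (hω : IsPrimitiveRoot ω n)
    (xj : F) (hxj : xj ≠ 0)
    (σ : ℕ → ℕ)
    (hσ : ∀ i, σ i = Nat.card {x : F // χ x * (starRingEnd ℂ) (χ (x + xj)) = ω ^ i}) :
    σ 0 + 1 = (Fintype.card F - 1) / n ∧
    ∀ i, 0 < i → i < n → σ i = (Fintype.card F - 1) / n := by
  classical
  have hn : 0 < n := hord ▸ χ.orderOf_pos
  have hq : (Fintype.card F - 1) / n = Nat.card χ.toUnitHom.ker := by
    rw [← Fintype.card_units, ← Nat.card_eq_fintype_card, χ.card_units_eq_orderOf_mul_card_ker,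
      hord, Nat.mul_div_cancel_left _ hn]
  have hfiber : ∀ i, Nat.card {y : F // χ y = ω ^ i} = Nat.card χ.toUnitHom.ker := fun i =>
    χ.card_fiber_eq_card_ker (by rw [← pow_mul, mul_comm, pow_mul, hord, hω.pow_eq_one, one_pow])
  have hσ' : ∀ i, σ i = Nat.card {y : F // χ y = ω ^ i ∧ y ≠ 1} := fun i => by
    simp_rw [hσ, MulChar.mul_starRingEnd_apply]
    refine card_fiber_comp_div_add hxj ?_
    rw [MulChar.map_zero]
    exact (pow_ne_zero i (hω.ne_zero hn.ne')).symm
  refine ⟨?_, fun i hi hin => ?_⟩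
  · rw [hq, ← hfiber 0, hσ']
    exact Set.ncard_sdiff_singleton_add_one (s := {y : F | χ y = ω ^ 0}) (by simp)
  · rw [hq, ← hfiber, hσ']
    refine Nat.card_congr (Equiv.subtypeEquivRight fun y => and_iff_left_of_imp ?_)
    rintro hy rfl
    exact hω.pow_ne_one_of_pos_of_lt hi.ne' hin (by simpa using hy.symm)

theorem stmt_16 (F : Type*) [Field F] [Fintype F] (n : ℕ) (hn : 1 < n)
    (χ : MulChar F ℂ) (hord : orderOf χ = n)
    (ω : ℂ) (hω : IsPrimitiveRoot ω n)
    (xj : F) (hxj : xj ≠ 0)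
    (σ : ℕ → ℕ)
    (hσ : ∀ i, σ i = Nat.card {x : F // χ x * (starRingEnd ℂ) (χ (x + xj)) = ω ^ i}) :
    σ 0 + 1 = (Fintype.card F - 1) / n ∧
    ∀ i, 0 < i → i < n → σ i = (Fintype.card F - 1) / n :=
  stmt_16_general F n χ hord ω hω xj hxj σ hσ
end

section
/- Let F_q be a finite field with q ≡ 1 mod 3 and A₀, A₁, A₂ the cosets of the nonzero cubes. For β ≠ 0, the sum over the three pairs (i,j) ∈ {(0,1),(1,2),(2,0)} of the number of ordered pairs (x,y), x ∈ A_i, y ∈ A_j, x + y = β, equals (q−1)/3. -/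
/-!
Write `A_k = α^k ⟨α^3⟩`. Since `α` generates `F^*` and `3 ∣ q - 1`, the `A_k` are the three
cosets of the cubes, so `x ∈ A_i` and `y ∈ A_{i+1}` for some `i` exactly when `y / x ∈ A_1`, and
the three sets in the sum partition `{(x, y) | y / x ∈ A_1, x + y = β}`. This set is in bijection
with `A_1` through `t = y / x`, with inverse `t ↦ (β / (1 + t), β t / (1 + t))`; the inverse is
defined because `-1 = (-1)^3` is a cube, so `-1 ∉ A_1`. Finally `A_k = α^k A_0`, so the three
cosets have the same size `(q - 1) / 3`.
-/

open Finset

section Monoid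

def powResidueClass {M : Type*} [Monoid M] (d : ℕ) (α : M) (k : Fin d) (x : M) : Prop :=
  ∃ n : ℕ, α ^ ((k : ℕ) + d * n) = x

variable {M : Type*} {d : ℕ} {α x y : M} {i j k : Fin d}

lemma powResidueClass_pow [Monoid M] [NeZero d] (α : M) (n : ℕ) :
    powResidueClass d α (Fin.ofNat d n) (α ^ n) :=
  ⟨n / d, by rw [Fin.val_ofNat, Nat.mod_add_div]⟩

lemma powResidueClass.mul [CommMonoid M] (hx : powResidueClass d α i x)
    (hy : powResidueClass d α j y) : powResidueClass d α (i + j) (x * y) := by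
  obtain ⟨m, rfl⟩ := hx
  obtain ⟨n, rfl⟩ := hy
  refine ⟨(i + j : ℕ) / d + m + n, ?_⟩
  rw [← pow_add, Fin.val_add]
  congr 1
  have := Nat.mod_add_div (i + j : ℕ) d
  linarith

lemma powResidueClass.pow_zero_class [Monoid M] [NeZero d] (hx : powResidueClass d α k x) :
    powResidueClass d α 0 (x ^ d) := by
  obtain ⟨n, rfl⟩ := hx
  exact ⟨k + d * n, by rw [Fin.val_zero, zero_add, ← pow_mul, mul_comm]⟩

lemma powResidueClass.unique [Monoid M] (hα : IsOfFinOrder α) (hd : d ∣ orderOf α)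
    (hi : powResidueClass d α i x) (hj : powResidueClass d α j x) : i = j := by
  obtain ⟨m, rfl⟩ := hi
  obtain ⟨n, hn⟩ := hj
  have h := (hα.pow_eq_pow_iff_modEq.1 hn).of_dvd hd
  have : (j : ℕ) ≡ i [MOD d] := by simpa [Nat.ModEq, Nat.add_mul_mod_self_left] using h
  exact Fin.ext (Nat.ModEq.eq_of_lt_of_lt this.symm i.isLt j.isLt)

lemma powResidueClass_iff_exists_mul [Monoid M] [NeZero d] :
    powResidueClass d α k y ↔ ∃ x, powResidueClass d α 0 x ∧ α ^ (k : ℕ) * x = y := by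
  simp only [powResidueClass, Fin.val_zero, zero_add, pow_add]
  constructor
  · rintro ⟨n, rfl⟩; exact ⟨_, ⟨n, rfl⟩, rfl⟩
  · rintro ⟨_, ⟨n, rfl⟩, rfl⟩; exact ⟨n, rfl⟩

end Monoid

section MonoidWithZero

variable {M₀ : Type*} [MonoidWithZero M₀] [NoZeroDivisors M₀] {d : ℕ} {α x : M₀} {k : Fin d}

lemma powResidueClass.ne_zero (hα : α ≠ 0) (hx : powResidueClass d α k x) : x ≠ 0 := by
  obtain ⟨n, rfl⟩ := hx
  exact pow_ne_zero _ hα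

end MonoidWithZero

section GroupWithZero

variable {G₀ : Type*} [GroupWithZero G₀] [Fintype G₀] {α : G₀}

lemma ne_zero_of_forall_pow_eq (hG₀ : Fintype.card G₀ ≠ 2)
    (hα : ∀ x : G₀, x ≠ 0 → ∃ n : ℕ, α ^ n = x) : α ≠ 0 := by
  classical
  rintro rfl
  have hunits : ∀ u : G₀ˣ, u = 1 := fun u => by
    obtain ⟨n, hn⟩ := hα u u.ne_zero
    cases n with
    | zero => exact Units.ext (by simpa using hn.symm)
    | succ n => exact absurd hn.symm (by simp)
  have h1 : Fintype.card G₀ˣ = 1 := Fintype.card_eq_one_iff.2 ⟨1, hunits⟩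
  have := Fintype.card_pos (α := G₀)
  rw [Fintype.card_units] at h1
  omega

lemma orderOf_eq_card_sub_one_of_forall_pow_eq (hα0 : α ≠ 0)
    (hα : ∀ x : G₀, x ≠ 0 → ∃ n : ℕ, α ^ n = x) : orderOf α = Fintype.card G₀ - 1 := by
  classical
  rw [← Fintype.card_units, ← Nat.card_eq_fintype_card, ← Units.val_mk0 hα0, orderOf_units]
  refine orderOf_eq_card_of_forall_mem_zpowers fun u => ?_
  obtain ⟨n, hn⟩ := hα u u.ne_zero
  have : Units.mk0 α hα0 ^ n = u := Units.ext (by simp [hn])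
  exact this ▸ Subgroup.npow_mem_zpowers _ n

end GroupWithZero

section Field

variable {F : Type*} [Field F] [Fintype F] [DecidableEq F]

lemma card_filter_div_and_add_eq {T : F → Prop} [DecidablePred T] (hT0 : ¬T 0) (hT1 : ¬T (-1))
    {β : F} (hβ : β ≠ 0) :
    #{p : F × F | T (p.2 / p.1) ∧ p.1 + p.2 = β} = #{t | T t} := by
  have hne : ∀ {t}, T t → t ≠ 0 ∧ 1 + t ≠ 0 := fun {t} ht =>
    ⟨fun h => hT0 (h ▸ ht), fun h => hT1 (eq_neg_of_add_eq_zero_right h ▸ ht)⟩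
  refine card_nbij' (fun p => p.2 / p.1) (fun t => (β / (1 + t), β * t / (1 + t)))
    (fun p hp => by simp_all) (fun t ht => ?_) (fun p hp => ?_) (fun t ht => ?_)
  · simp only [coe_filter, mem_univ, true_and, Set.mem_ofPred_eq] at ht ⊢
    obtain ⟨ht0, ht1⟩ := hne ht
    exact ⟨by field_simp; exact ht, by field_simp⟩
  · simp only [coe_filter, mem_univ, true_and, Set.mem_ofPred_eq] at hp
    obtain ⟨hT, hsum⟩ := hp
    -- `p.2 / 0 = 0`, so `¬T 0` rules out `p.1 = 0`
    have hx : p.1 ≠ 0 := fun h => hT0 (by simpa [h] using hT)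
    have h1 : 1 + p.2 / p.1 = β / p.1 := by field_simp; rw [hsum]
    ext <;> simp only [h1] <;> field_simp
  · simp only [coe_filter, mem_univ, true_and, Set.mem_ofPred_eq] at ht
    obtain ⟨ht0, ht1⟩ := hne ht
    field_simp

end Field

section PowResidueClass

variable {F : Type*} [Field F] {d : ℕ} [NeZero d] {α : F}

lemma exists_powResidueClass (hα : ∀ x : F, x ≠ 0 → ∃ n : ℕ, α ^ n = x) {x : F} (hx : x ≠ 0) :
    ∃ k, powResidueClass d α k x := by
  obtain ⟨n, rfl⟩ := hα x hx
  exact ⟨_, powResidueClass_pow (d := d) α n⟩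

lemma powResidueClass_one_div_iff (hα : ∀ x : F, x ≠ 0 → ∃ n : ℕ, α ^ n = x) (hα0 : α ≠ 0)
    (hfin : IsOfFinOrder α) (hd : d ∣ orderOf α) {x y : F} :
    powResidueClass d α 1 (y / x) ↔
      ∃ i, powResidueClass d α i x ∧ powResidueClass d α (i + 1) y := by
  constructor
  · intro h
    have hx : x ≠ 0 := fun hx => h.ne_zero hα0 (by simp [hx])
    obtain ⟨i, hi⟩ := exists_powResidueClass (d := d) hα hx
    exact ⟨i, hi, mul_div_cancel₀ y hx ▸ hi.mul h⟩
  · rintro ⟨i, hi, hy⟩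
    have hx := hi.ne_zero hα0
    obtain ⟨j, hj⟩ := exists_powResidueClass (d := d) hα (div_ne_zero (hy.ne_zero hα0) hx)
    have : i + j = i + 1 := (hi.mul hj).unique hfin hd (by rwa [mul_div_cancel₀ y hx])
    exact add_left_cancel this ▸ hj

lemma not_powResidueClass_one_neg_one (hα : ∀ x : F, x ≠ 0 → ∃ n : ℕ, α ^ n = x)
    (hfin : IsOfFinOrder α) (hd : d ∣ orderOf α) (hodd : Odd d) (hd1 : d ≠ 1) :
    ¬powResidueClass d α 1 (-1) := by
  intro h
  obtain ⟨k, hk⟩ := exists_powResidueClass (d := d) hα (neg_ne_zero.2 one_ne_zero)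
  have h0 : powResidueClass d α 0 (-1) := (hodd.neg_one_pow (α := F)) ▸ hk.pow_zero_class
  have h10 : (1 : Fin d) = 0 := h.unique hfin hd h0
  exact hd1 (by simpa using congrArg Fin.val h10)

variable [Fintype F] [DecidableEq F]

open Classical in
lemma card_filter_powResidueClass_eq (hα0 : α ≠ 0) (k : Fin d) :
    #{x | powResidueClass d α k x} = #{x | powResidueClass d α 0 x} := by
  have : ({x | powResidueClass d α k x} : Finset F) =
      ({x | powResidueClass d α 0 x} : Finset F).image (α ^ (k : ℕ) * ·) := by
    ext y
    simp [powResidueClass_iff_exists_mul (k := k)]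
  rw [this, card_image_of_injective _ (mul_right_injective₀ (pow_ne_zero _ hα0))]

open Classical in
lemma mul_card_filter_powResidueClass_zero (hα : ∀ x : F, x ≠ 0 → ∃ n : ℕ, α ^ n = x)
    (hα0 : α ≠ 0) (hfin : IsOfFinOrder α) (hd : d ∣ orderOf α) :
    d * #{x | powResidueClass d α 0 x} = Fintype.card F - 1 := by
  have hunion : (univ : Finset (Fin d)).biUnion (fun k => {x | powResidueClass d α k x}) =
      univ.erase 0 := by
    ext x
    simp only [mem_biUnion, mem_univ, true_and, mem_filter, mem_erase, and_true]
    exact ⟨fun ⟨_, hk⟩ => hk.ne_zero hα0, exists_powResidueClass hα⟩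
  rw [← card_univ, ← card_erase_of_mem (mem_univ 0), ← hunion, card_biUnion]
  · simp [card_filter_powResidueClass_eq hα0]
  · exact fun i _ j _ hij => disjoint_filter.2 fun _ _ hi hj => hij (hi.unique hfin hd hj)

open Classical in
lemma sum_card_filter_powResidueClass_add_one (hα : ∀ x : F, x ≠ 0 → ∃ n : ℕ, α ^ n = x)
    (hα0 : α ≠ 0) (hfin : IsOfFinOrder α) (hd : d ∣ orderOf α) (hodd : Odd d) (hd1 : d ≠ 1)
    {β : F} (hβ : β ≠ 0) :
    ∑ i : Fin d, #{p : F × F | powResidueClass d α i p.1 ∧ powResidueClass d α (i + 1) p.2 ∧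
      p.1 + p.2 = β} = #{t | powResidueClass d α 1 t} := by
  rw [← card_biUnion, ← card_filter_div_and_add_eq (fun h => h.ne_zero hα0 rfl)
    (not_powResidueClass_one_neg_one hα hfin hd hodd hd1) hβ]
  · congr 1
    ext p
    simp only [mem_biUnion, mem_univ, true_and, mem_filter,
      powResidueClass_one_div_iff hα hα0 hfin hd, ← and_assoc, exists_and_right]
  · exact fun i _ j _ hij => disjoint_filter.2 fun _ _ hi hj => hij (hi.1.unique hfin hd hj.1)

end PowResidueClass

theorem stmt_18 (F : Type*) [Field F] [Fintype F]
    (h3 : 3 ∣ Fintype.card F - 1)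
    (α : F) (hα : ∀ x : F, x ≠ 0 → ∃ n : ℕ, α ^ n = x)
    (β : F) (hβ : β ≠ 0)
    (A : Fin 3 → F → Prop)
    (hA : ∀ k x, A k x ↔ ∃ n : ℕ, α ^ ((k : ℕ) + 3 * n) = x) :
    (Nat.card {p : F × F // A 0 p.1 ∧ A 1 p.2 ∧ p.1 + p.2 = β} : ℚ) +
    (Nat.card {p : F × F // A 1 p.1 ∧ A 2 p.2 ∧ p.1 + p.2 = β} : ℚ) +
    (Nat.card {p : F × F // A 2 p.1 ∧ A 0 p.2 ∧ p.1 + p.2 = β} : ℚ) =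
      ((Fintype.card F : ℚ) - 1) / 3 := by
  classical
  have hα0 : α ≠ 0 := ne_zero_of_forall_pow_eq (by omega) hα
  have hord := orderOf_eq_card_sub_one_of_forall_pow_eq hα0 hα
  have hfin : IsOfFinOrder α := orderOf_pos_iff.1 (hord ▸ Nat.sub_pos_of_lt Fintype.one_lt_card)
  obtain rfl : A = powResidueClass 3 α := funext₂ fun k x => propext (hA k x)
  have hsum := sum_card_filter_powResidueClass_add_one hα hα0 hfin (hord ▸ h3)
    (by decide) (by decide) hβ
  have hcard := mul_card_filter_powResidueClass_zero hα hα0 hfin (hord ▸ h3)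
  rw [Fin.sum_univ_three, card_filter_powResidueClass_eq hα0] at hsum
  simp only [zero_add, Fin.reduceAdd] at hsum
  simp only [Nat.card_eq_fintype_card, Fintype.card_subtype]
  rw [eq_div_iff three_ne_zero, ← Nat.cast_add, ← Nat.cast_add, hsum, ← Nat.cast_one,
    ← Nat.cast_sub Fintype.card_pos, ← hcard]
  push_cast
  ring
end
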